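/- arXiv:1807.06452 — 7 statements merged into one kernel-verified Lean document; each statement's English description precedes it below -/
import Mathlib

section
/- Let g be an element of a group G that admits a finite left Engel sink. Then the set S = { z ∈ G : z = [z,_n g] for some n ≥ 1 } is a finite left Engel sink of g, and S is contained in every left Engel sink of g (so S is the unique minimal left Engel sink of g). -/
/-- The commutator `[a,b] = a⁻¹ b⁻¹ a b`. -/
def cmtr {G : Type*} [Group G] (a b : G) : G := a⁻¹ * b⁻¹ * a * b

/-- `engel a b n` is the left-normed Engel commutator `[a,_n b] = [[...[[a,b],b],...],b]`
with `b` repeated `n` times. -/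
def engel {G : Type*} [Group G] (a b : G) : ℕ → G
  | 0 => a
  | n + 1 => cmtr (engel a b n) b

/-- A finite subset `R` of `G` is a right Engel sink for `g` if for every `x ∈ G` there is a
positive integer `n₀` such that `[g,_n x] ∈ R` for all `n ≥ n₀`. -/
def IsRightEngelSink {G : Type*} [Group G] (g : G) (R : Set G) : Prop :=
  R.Finite ∧ ∀ x : G, ∃ n₀ : ℕ, 0 < n₀ ∧ ∀ n ≥ n₀, engel g x n ∈ R

/-- A finite subset `E` of `G` is a left Engel sink for `g` if for every `x ∈ G` there is a
positive integer `n₀` such that `[x,_n g] ∈ E` for all `n ≥ n₀`. -/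
def IsLeftEngelSink {G : Type*} [Group G] (g : G) (E : Set G) : Prop :=
  E.Finite ∧ ∀ x : G, ∃ n₀ : ℕ, 0 < n₀ ∧ ∀ n ≥ n₀, engel x g n ∈ E

/-- An element is almost right Engel if it admits a finite right Engel sink. -/
def AlmostRightEngel {G : Type*} [Group G] (g : G) : Prop :=
  ∃ R : Set G, IsRightEngelSink g R

/-- A group is locally nilpotent if every finitely generated subgroup is nilpotent. -/
def LocallyNilpotent (G : Type*) [Group G] : Prop :=
  ∀ H : Subgroup G, H.FG → Group.IsNilpotent H


theorem engel_add {G : Type*} [Group G] (x g : G) (m k : ℕ) :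
    engel x g (m + k) = engel (engel x g m) g k := by
  induction k with
  | zero => rfl
  | succ k ih => rw [← Nat.add_assoc]; simp [engel, ih]

theorem engel_fix {G : Type*} [Group G] {z g : G} {n : ℕ} (h : engel z g n = z) :
    ∀ k, engel z g (k * n) = z := by
  intro k
  induction k with
  | zero => simp [engel]
  | succ k ih => rw [Nat.succ_mul, engel_add, ih, h]

/-- If `g` admits a finite left Engel sink, then the set of `z` with `z = [z,_n g]` for some
`n ≥ 1` is a finite left Engel sink of `g` contained in every left Engel sink of `g`,
i.e. it is the unique minimal left Engel sink. -/
theorem minimal_left_engel_sink {G : Type*} [Group G] (g : G)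
    (h : ∃ E : Set G, IsLeftEngelSink g E) :
    IsLeftEngelSink g {z : G | ∃ n : ℕ, 1 ≤ n ∧ engel z g n = z} ∧
      ∀ E : Set G, IsLeftEngelSink g E →
        {z : G | ∃ n : ℕ, 1 ≤ n ∧ engel z g n = z} ⊆ E := by
  obtain ⟨E, hEfin, hE⟩ := h
  have hsub : ∀ F : Set G, IsLeftEngelSink g F →
      {z : G | ∃ n : ℕ, 1 ≤ n ∧ engel z g n = z} ⊆ F := by
    rintro F ⟨hFfin, hF⟩ z ⟨n, hn1, hzn⟩
    obtain ⟨n₀, hn₀, hmem⟩ := hF z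
    have hle : n₀ ≤ n₀ * n := Nat.le_mul_of_pos_right n₀ (by omega)
    have := hmem (n₀ * n) hle
    rwa [engel_fix hzn n₀] at this
  refine ⟨⟨hEfin.subset (hsub E ⟨hEfin, hE⟩), ?_⟩, hsub⟩
  intro x
  obtain ⟨n₀, hn₀, hmem⟩ := hE x
  have : Finite E := hEfin.to_subtype
  obtain ⟨i, j, hij, heq⟩ := Finite.exists_ne_map_eq_of_infinite
    (fun m : ℕ => (⟨engel x g (n₀ + m), hmem _ (Nat.le_add_right _ _)⟩ : E))
  have heq' : engel x g (n₀ + i) = engel x g (n₀ + j) := congrArg Subtype.val heq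
  have key : ∃ a b : ℕ, a < b ∧ engel x g (n₀ + a) = engel x g (n₀ + b) := by
    rcases lt_or_gt_of_ne hij with h' | h'
    · exact ⟨i, j, h', heq'⟩
    · exact ⟨j, i, h', heq'.symm⟩
  obtain ⟨a, b, hab, hs⟩ := key
  set p := b - a with hp
  have hp1 : 1 ≤ p := by omega
  have per : ∀ k, engel x g (n₀ + a + k + p) = engel x g (n₀ + a + k) := by
    intro k
    induction k with
    | zero =>
      have : n₀ + a + 0 + p = n₀ + b := by omega
      rw [this]
      exact hs.symm
    | succ k ih =>
      have e1 : n₀ + a + (k + 1) + p = (n₀ + a + k + p) + 1 := by omega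
      have e2 : n₀ + a + (k + 1) = (n₀ + a + k) + 1 := by omega
      rw [e1, e2]
      show cmtr (engel x g (n₀ + a + k + p)) g = cmtr (engel x g (n₀ + a + k)) g
      rw [ih]
  refine ⟨n₀ + a, by omega, ?_⟩
  intro n hn
  refine ⟨p, hp1, ?_⟩
  rw [← engel_add]
  have : n = n₀ + a + (n - (n₀ + a)) := by omega
  rw [this]
  exact per _
end

section
/- Let g be an element of a group G that admits a finite right Engel sink. Then the set S = { z ∈ G : there exist x ∈ G and integers n ≥ 1, m ≥ 1 with z = [g,_n x] = [g,_{n+m} x] } is a finite right Engel sink of g, and S is contained in every right Engel sink of g (so S is the unique minimal right Engel sink of g). -/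
lemma engel_period {G : Type*} [Group G] (g x : G) (n m : ℕ)
    (h : engel g x (n + m) = engel g x n) :
    ∀ j, engel g x (n + j + m) = engel g x (n + j) := by
  intro j
  induction j with
  | zero => simpa using h
  | succ j ih =>
      have e : n + (j + 1) + m = (n + j + m) + 1 := by ring
      rw [e, show engel g x ((n + j + m) + 1) = cmtr (engel g x (n + j + m)) x from rfl, ih]
      rfl

lemma engel_period_mul {G : Type*} [Group G] (g x : G) (n m : ℕ)
    (h : engel g x (n + m) = engel g x n) :
    ∀ k, engel g x (n + k * m) = engel g x n := by
  intro k
  induction k with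
  | zero => simp
  | succ k ih =>
      have e : n + (k + 1) * m = n + k * m + m := by ring
      rw [e, engel_period g x n m h (k * m), ih]

/-- If `g` admits a finite right Engel sink, then the set of `z` with
`z = [g,_n x] = [g,_{n+m} x]` for some `x ∈ G`, `n ≥ 1`, `m ≥ 1` is a finite right Engel
sink of `g` contained in every right Engel sink of `g`, i.e. it is the unique minimal
right Engel sink. -/
theorem minimal_right_engel_sink {G : Type*} [Group G] (g : G)
    (h : AlmostRightEngel g) :
    IsRightEngelSink g
        {z : G | ∃ x : G, ∃ n : ℕ, 1 ≤ n ∧ ∃ m : ℕ, 1 ≤ m ∧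
          engel g x n = z ∧ engel g x (n + m) = z} ∧
      ∀ R : Set G, IsRightEngelSink g R →
        {z : G | ∃ x : G, ∃ n : ℕ, 1 ≤ n ∧ ∃ m : ℕ, 1 ≤ m ∧
          engel g x n = z ∧ engel g x (n + m) = z} ⊆ R := by
  obtain ⟨R, hRfin, hR⟩ := h
  have hsub : ∀ R' : Set G, IsRightEngelSink g R' →
      {z : G | ∃ x : G, ∃ n : ℕ, 1 ≤ n ∧ ∃ m : ℕ, 1 ≤ m ∧
        engel g x n = z ∧ engel g x (n + m) = z} ⊆ R' := by
    rintro R' ⟨_, hR'⟩ z ⟨x, n, hn, m, hm, hz1, hz2⟩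
    obtain ⟨n₀, hn₀pos, hn₀⟩ := hR' x
    have hper : engel g x (n + m) = engel g x n := hz2.trans hz1.symm
    have hmul := engel_period_mul g x n m hper n₀
    have hge : n₀ ≤ n + n₀ * m := by
      calc n₀ = n₀ * 1 := (mul_one n₀).symm
        _ ≤ n₀ * m := Nat.mul_le_mul_left n₀ hm
        _ ≤ n + n₀ * m := Nat.le_add_left _ _
    rw [← hz1, ← hmul]
    exact hn₀ _ hge
  refine ⟨⟨hRfin.subset (hsub R ⟨hRfin, hR⟩), ?_⟩, hsub⟩
  intro x
  obtain ⟨n₀, hn₀pos, hn₀⟩ := hR x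
  have hinf : (Set.Ici n₀).Infinite := Set.Ici_infinite n₀
  have hmaps : Set.MapsTo (fun n => engel g x n) (Set.Ici n₀) R := fun n hn => hn₀ n hn
  obtain ⟨a, ha, b, hb, hne, heq⟩ := hinf.exists_ne_map_eq_of_mapsTo hmaps hRfin
  have key : ∀ a b : ℕ, n₀ ≤ a → a < b → engel g x a = engel g x b →
      ∃ n₁ : ℕ, 0 < n₁ ∧ ∀ n ≥ n₁, engel g x n ∈
        {z : G | ∃ x : G, ∃ n : ℕ, 1 ≤ n ∧ ∃ m : ℕ, 1 ≤ m ∧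
          engel g x n = z ∧ engel g x (n + m) = z} := by
    intro a b ha hab heq
    refine ⟨a, lt_of_lt_of_le hn₀pos ha, ?_⟩
    intro n hn
    obtain ⟨j, rfl⟩ := Nat.exists_eq_add_of_le hn
    have hper : engel g x (a + (b - a)) = engel g x a := by
      rw [Nat.add_sub_cancel' hab.le]; exact heq.symm
    exact ⟨x, a + j, by omega, b - a, by omega, rfl,
      engel_period g x a (b - a) hper j⟩
  rcases hne.lt_or_gt with hlt | hlt
  · exact key a b ha hlt heq
  · exact key b a hb hlt heq.symm
end

section
/- Let G be a metabelian group (that is, the commutator subgroup of G is abelian), let g ∈ G, and let R be a right Engel sink of the inverse g⁻¹. Then R is also a left Engel sink of g. In particular, if g⁻¹ admits a finite right Engel sink, then g admits a finite left Engel sink. -/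
/-!
Put `c = [x, g]`. A direct computation gives `[g⁻¹, c g] = [c, g]`. From there on every
Engel commutator lies in the abelian group `G'`, as does `c`, so commuting it with `c g` is
the same as commuting it with `g`. Hence `[g⁻¹,_n c g] = [x,_{n+1} g]` for `n ≥ 1`, and the
sink of `g⁻¹` at the element `c g` captures the left Engel commutators of `x` at `g`.
-/

open scoped commutatorElement in
lemma cmtr_mem_commutator {G : Type*} [Group G] (a b : G) : cmtr a b ∈ commutator G := by
  have : cmtr a b = ⁅a⁻¹, b⁻¹⁆ := by simp [cmtr, commutatorElement_def]
  rw [this, commutator_def]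
  exact Subgroup.commutator_mem_commutator (Subgroup.mem_top _) (Subgroup.mem_top _)

lemma cmtr_mul_right_of_commute {G : Type*} [Group G] {e c : G} (h : Commute e c) (g : G) :
    cmtr e (c * g) = cmtr e g := by
  have hconj : c⁻¹ * e * c = e := by rw [mul_assoc, h.eq, inv_mul_cancel_left]
  calc cmtr e (c * g) = e⁻¹ * g⁻¹ * (c⁻¹ * e * c) * g := by simp only [cmtr]; group
    _ = cmtr e g := by rw [hconj]; rfl

lemma cmtr_inv_cmtr_mul {G : Type*} [Group G] (x g : G) :
    cmtr g⁻¹ (cmtr x g * g) = cmtr (cmtr x g) g := by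
  simp only [cmtr]; group

lemma engel_inv_cmtr_mul_eq_engel {G : Type*} [Group G]
    (hmet : ∀ a ∈ commutator G, ∀ b ∈ commutator G, a * b = b * a) (x g : G) (n : ℕ) :
    engel g⁻¹ (cmtr x g * g) (n + 1) = engel x g (n + 2) := by
  induction n with
  | zero => exact cmtr_inv_cmtr_mul x g
  | succ n ih =>
    change cmtr (engel g⁻¹ (cmtr x g * g) (n + 1)) (cmtr x g * g) = cmtr (engel x g (n + 2)) g
    rw [ih]
    exact cmtr_mul_right_of_commute
      (hmet _ (cmtr_mem_commutator _ _) _ (cmtr_mem_commutator x g)) g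

/-- In a metabelian group, a right Engel sink of `g⁻¹` is a left Engel sink of `g`. -/
theorem metabelian_right_sink_is_left_sink {G : Type*} [Group G]
    (hmet : ∀ a ∈ commutator G, ∀ b ∈ commutator G, a * b = b * a)
    (g : G) (R : Set G) (hR : IsRightEngelSink g⁻¹ R) :
    IsLeftEngelSink g R := by
  obtain ⟨hfin, hsink⟩ := hR
  refine ⟨hfin, fun x => ?_⟩
  obtain ⟨n₀, hn₀, hmem⟩ := hsink (cmtr x g * g)
  refine ⟨n₀ + 1, n₀.succ_pos, fun n hn => ?_⟩
  obtain ⟨k, rfl⟩ : ∃ k, n = k + 2 := ⟨n - 2, by omega⟩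
  rw [← engel_inv_cmtr_mul_eq_engel hmet x g k]
  exact hmem (k + 1) (by omega)
end

section
/- Let G be a finite group, V an abelian subgroup of G, and g ∈ G an element normalizing V whose order is coprime to |V|. Let H be the subgroup generated by V and g, and let [V,g] denote the subgroup generated by all commutators [v,g] with v ∈ V. Then [V,g] equals the set { z ∈ H : z = [z,_n g] for some n ≥ 1 } (the minimal left Engel sink of g with respect to H), and moreover [V,g] is a right Engel sink of g with respect to H that is contained in every right Engel sink of g with respect to H (so [V,g] is also the minimal right Engel sink of g with respect to H). -/
/-
For `v ∈ V` the map `v ↦ [v, g] = v⁻¹ v^g` is a homomorphism `V → V`, since `V` is abelian and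
normalised by `g`; its image is `[V, g]`. If `w = [v, g]` commutes with `g`, then `wⁿ = [v, gⁿ]`,
so the order of `w` divides both `|g|` and `|V|` and `w = 1`. Hence `z ↦ [z, g]` is injective on the
finite group `[V, g]`, and every element of `[V, g]` is a periodic point of it. Conversely, every
`z = v gᵏ ∈ H` has `[z, g] = [v, g]^(gᵏ) ∈ [V, g]`, so `z = [z,_n g]` forces `z ∈ [V, g]`.
For the right sinks: `[V, g]` is normal in `H`, and each `w ∈ [V, g]` equals `[g, ug]` for some
`u ∈ V`; as `u` centralises `[V, g]`, `[g,_(n+1) ug] = [w,_n g]`, which returns to `w` for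
arbitrarily large `n`.
-/

open Subgroup Function

section Commutator

variable {G : Type*} [Group G]

lemma cmtr_eq_inv_mul_conj (a b : G) : cmtr a b = a⁻¹ * (b⁻¹ * a * b) := by
  simp only [cmtr, mul_assoc]

lemma cmtr_one_left (b : G) : cmtr 1 b = 1 := by
  simp [cmtr]

lemma cmtr_one_right (a : G) : cmtr a 1 = 1 := by
  simp [cmtr]

lemma inv_cmtr (a b : G) : (cmtr a b)⁻¹ = cmtr b a := by
  simp only [cmtr]; group

lemma cmtr_eq_one_iff_commute {a b : G} : cmtr a b = 1 ↔ Commute a b := by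
  rw [cmtr_eq_inv_mul_conj, inv_mul_eq_one, mul_assoc, eq_inv_mul_iff_mul_eq]
  exact eq_comm

lemma cmtr_mul_left (a b c : G) : cmtr (a * b) c = b⁻¹ * cmtr a c * b * cmtr b c := by
  simp only [cmtr]; group

lemma cmtr_mul_right_of_commute_s8 {a u : G} (h : Commute a u) (b : G) :
    cmtr a (u * b) = cmtr a b := by
  rw [cmtr_eq_inv_mul_conj, cmtr_eq_inv_mul_conj, mul_inv_rev,
    show b⁻¹ * u⁻¹ * a * (u * b) = b⁻¹ * (u⁻¹ * (a * u)) * b by group, h.eq,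
    inv_mul_cancel_left]

lemma cmtr_mul_self_right (u g : G) : cmtr g (u * g) = g⁻¹ * (cmtr u g)⁻¹ * g := by
  simp only [cmtr]; group

lemma cmtr_pow_of_commute {v g : G} (h : Commute (cmtr v g) g) (n : ℕ) :
    cmtr v g ^ n = cmtr v (g ^ n) := by
  induction n with
  | zero => rw [pow_zero, pow_zero, cmtr_one_right]
  | succ n ih =>
    calc cmtr v g ^ (n + 1) = cmtr v (g ^ n) * ((g ^ n)⁻¹ * cmtr v g * g ^ n) := by
          rw [mul_assoc, (h.pow_right n).eq, inv_mul_cancel_left, pow_succ, ih]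
      _ = cmtr v (g ^ (n + 1)) := by simp only [cmtr]; group

lemma cmtr_mem_of_mem_normalizer {K : Subgroup G} {w x : G} (hw : w ∈ K)
    (hx : x ∈ normalizer (K : Set G)) : cmtr w x ∈ K := by
  rw [cmtr_eq_inv_mul_conj]
  exact mul_mem (inv_mem hw) ((mem_normalizer_iff''.mp hx w).mp hw)

lemma engel_eq_iterate (a b : G) (n : ℕ) : engel a b n = (cmtr · b)^[n] a := by
  induction n with
  | zero => rfl
  | succ n ih => rw [engel, ih, iterate_succ_apply']

lemma engel_succ_eq_iterate (a b : G) (n : ℕ) :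
    engel a b (n + 1) = (cmtr · b)^[n] (cmtr a b) := by
  rw [engel_eq_iterate, iterate_succ_apply]

end Commutator

lemma Subgroup.mem_normalizer_of_forall_conj_mem {G : Type*} [Group G] {K : Subgroup G}
    [Finite K] {x : G} (h : ∀ k ∈ K, x⁻¹ * k * x ∈ K) : x ∈ normalizer (K : Set G) := by
  rw [← inv_mem_iff, mem_normalizer_iff_map_conj_eq]
  refine eq_of_le_of_card_ge ?_ (card_map_of_injective (MulAut.conj x⁻¹).injective).ge
  rintro _ ⟨k, hk, rfl⟩
  simpa using h k hk

lemma Set.InjOn.mem_periodicPts {α : Type*} {f : α → α} {s : Set α} [Finite s]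
    (hinj : InjOn f s) (hmaps : MapsTo f s s) {x : α} (hx : x ∈ s) : x ∈ periodicPts f := by
  obtain ⟨n, hn, hper⟩ :=
    Function.mem_periodicPts.mp ((hmaps.restrict_inj.mpr hinj).mem_periodicPts ⟨x, hx⟩)
  refine mk_mem_periodicPts hn ?_
  simpa [IsPeriodicPt, IsFixedPt, hmaps.coe_iterate_restrict] using congrArg Subtype.val hper

def cmtrSubgroup {G : Type*} [Group G] (V : Subgroup G) (g : G) : Subgroup G :=
  closure {z : G | ∃ v ∈ V, z = cmtr v g}

section CmtrSubgroup

variable {G : Type*} [Group G] {V : Subgroup G} {g : G}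

lemma cmtr_mem_cmtrSubgroup {v : G} (hv : v ∈ V) : cmtr v g ∈ cmtrSubgroup V g :=
  subset_closure ⟨v, hv, rfl⟩

lemma cmtrSubgroup_le (hg : g ∈ normalizer (V : Set G)) : cmtrSubgroup V g ≤ V := by
  rw [cmtrSubgroup, closure_le]
  rintro _ ⟨v, hv, rfl⟩
  exact cmtr_mem_of_mem_normalizer hv hg

lemma cmtr_mul_of_mem (hab : ∀ a ∈ V, ∀ b ∈ V, a * b = b * a) (hg : g ∈ normalizer (V : Set G))
    {a b : G} (ha : a ∈ V) (hb : b ∈ V) : cmtr (a * b) g = cmtr a g * cmtr b g := by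
  rw [cmtr_mul_left, mul_assoc b⁻¹, hab _ (cmtr_mem_of_mem_normalizer ha hg) b hb,
    inv_mul_cancel_left]

lemma mem_cmtrSubgroup_iff (hab : ∀ a ∈ V, ∀ b ∈ V, a * b = b * a)
    (hg : g ∈ normalizer (V : Set G)) {z : G} :
    z ∈ cmtrSubgroup V g ↔ ∃ v ∈ V, cmtr v g = z := by
  let φ : V →* G := MonoidHom.mk' (fun v ↦ cmtr v g) fun a b ↦ cmtr_mul_of_mem hab hg a.2 b.2
  have hrange : {z : G | ∃ v ∈ V, z = cmtr v g} = φ.range := by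
    ext; simp [φ, eq_comm]
  rw [cmtrSubgroup, hrange, closure_eq]
  simp [φ]

lemma conj_mem_cmtrSubgroup (hab : ∀ a ∈ V, ∀ b ∈ V, a * b = b * a)
    (hg : g ∈ normalizer (V : Set G)) {w : G} (hw : w ∈ cmtrSubgroup V g) :
    g⁻¹ * w * g ∈ cmtrSubgroup V g := by
  obtain ⟨v, hv, rfl⟩ := (mem_cmtrSubgroup_iff hab hg).mp hw
  rw [show g⁻¹ * cmtr v g * g = cmtr (g⁻¹ * v * g) g by simp only [cmtr]; group]
  exact cmtr_mem_cmtrSubgroup ((mem_normalizer_iff''.mp hg v).mp hv)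

lemma sup_zpowers_le_normalizer_cmtrSubgroup [Finite G] (hab : ∀ a ∈ V, ∀ b ∈ V, a * b = b * a)
    (hg : g ∈ normalizer (V : Set G)) :
    V ⊔ zpowers g ≤ normalizer (cmtrSubgroup V g : Set G) := by
  refine sup_le (fun v hv ↦ ?_) ?_
  · refine mem_normalizer_of_forall_conj_mem fun w hw ↦ ?_
    rwa [mul_assoc, hab w (cmtrSubgroup_le hg hw) v hv, inv_mul_cancel_left]
  · rw [zpowers_le]
    exact mem_normalizer_of_forall_conj_mem fun w ↦ conj_mem_cmtrSubgroup hab hg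

lemma cmtr_mem_cmtrSubgroup_of_mem_sup [Finite G] (hab : ∀ a ∈ V, ∀ b ∈ V, a * b = b * a)
    (hg : g ∈ normalizer (V : Set G)) {x : G} (hx : x ∈ V ⊔ zpowers g) :
    cmtr x g ∈ cmtrSubgroup V g := by
  rw [← SetLike.mem_coe, coe_mul_of_right_le_normalizer_left V _ (zpowers_le.mpr hg)] at hx
  obtain ⟨v, hv, _, ⟨k, rfl⟩, rfl⟩ := hx
  have hk : g ^ k ∈ normalizer (cmtrSubgroup V g : Set G) :=
    sup_zpowers_le_normalizer_cmtrSubgroup hab hg (mem_sup_right (zpow_mem_zpowers g k))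
  rw [cmtr_mul_left, cmtr_eq_one_iff_commute.mpr (Commute.zpow_left rfl k), mul_one]
  exact (mem_normalizer_iff''.mp hk _).mp (cmtr_mem_cmtrSubgroup hv)

lemma eq_one_of_cmtr_eq_one (hab : ∀ a ∈ V, ∀ b ∈ V, a * b = b * a)
    (hg : g ∈ normalizer (V : Set G)) (hcop : Nat.Coprime (orderOf g) (Nat.card V)) {w : G}
    (hw : w ∈ cmtrSubgroup V g) (h : cmtr w g = 1) : w = 1 := by
  obtain ⟨v, -, rfl⟩ := (mem_cmtrSubgroup_iff hab hg).mp hw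
  have hpow : cmtr v g ^ orderOf g = 1 := by
    rw [cmtr_pow_of_commute (cmtr_eq_one_iff_commute.mp h), pow_orderOf_eq_one, cmtr_one_right]
  rw [← orderOf_eq_one_iff]
  exact Nat.eq_one_of_dvd_coprimes hcop (orderOf_dvd_of_pow_eq_one hpow)
    (V.orderOf_dvd_natCard (cmtrSubgroup_le hg hw))

lemma mapsTo_cmtr_cmtrSubgroup (hg : g ∈ normalizer (V : Set G)) :
    Set.MapsTo (cmtr · g) (cmtrSubgroup V g : Set G) (cmtrSubgroup V g) :=
  fun _ hw ↦ cmtr_mem_cmtrSubgroup (cmtrSubgroup_le hg hw)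

lemma injOn_cmtr_cmtrSubgroup (hab : ∀ a ∈ V, ∀ b ∈ V, a * b = b * a)
    (hg : g ∈ normalizer (V : Set G)) (hcop : Nat.Coprime (orderOf g) (Nat.card V)) :
    Set.InjOn (cmtr · g) (cmtrSubgroup V g : Set G) := by
  intro a ha b hb h
  have ha' := cmtrSubgroup_le hg ha
  have hb' := cmtrSubgroup_le hg hb
  have hinv : cmtr b⁻¹ g = (cmtr b g)⁻¹ := by
    rw [eq_inv_iff_mul_eq_one, ← cmtr_mul_of_mem hab hg (inv_mem hb') hb', inv_mul_cancel,
      cmtr_one_left]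
  rw [← mul_inv_eq_one]
  refine eq_one_of_cmtr_eq_one hab hg hcop (mul_mem ha (inv_mem hb)) ?_
  rw [cmtr_mul_of_mem hab hg ha' (inv_mem hb'), hinv]
  exact mul_inv_eq_one.mpr h

lemma mem_periodicPts_cmtr [Finite G] (hab : ∀ a ∈ V, ∀ b ∈ V, a * b = b * a)
    (hg : g ∈ normalizer (V : Set G)) (hcop : Nat.Coprime (orderOf g) (Nat.card V)) {w : G}
    (hw : w ∈ cmtrSubgroup V g) : w ∈ periodicPts (cmtr · g) :=
  (injOn_cmtr_cmtrSubgroup hab hg hcop).mem_periodicPts (mapsTo_cmtr_cmtrSubgroup hg) hw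

end CmtrSubgroup

section EngelSinks

variable {G : Type*} [Group G] [Finite G] {V : Subgroup G} {g : G}

lemma coe_cmtrSubgroup_eq_setOf_engel (hab : ∀ a ∈ V, ∀ b ∈ V, a * b = b * a)
    (hg : g ∈ normalizer (V : Set G)) (hcop : Nat.Coprime (orderOf g) (Nat.card V)) :
    (cmtrSubgroup V g : Set G) = {z | z ∈ V ⊔ zpowers g ∧ ∃ n, 1 ≤ n ∧ engel z g n = z} := by
  ext z
  constructor
  · intro hz
    refine ⟨mem_sup_left (cmtrSubgroup_le hg hz), minimalPeriod (cmtr · g) z,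
      minimalPeriod_pos_of_mem_periodicPts (mem_periodicPts_cmtr hab hg hcop hz), ?_⟩
    rw [engel_eq_iterate]
    exact isPeriodicPt_minimalPeriod _ z
  · rintro ⟨hz, n, hn, hper⟩
    obtain ⟨m, rfl⟩ : ∃ m, n = m + 1 := ⟨n - 1, by omega⟩
    rw [SetLike.mem_coe, ← hper, engel_succ_eq_iterate]
    exact (mapsTo_cmtr_cmtrSubgroup hg).iterate m (cmtr_mem_cmtrSubgroup_of_mem_sup hab hg hz)

lemma engel_mem_cmtrSubgroup (hab : ∀ a ∈ V, ∀ b ∈ V, a * b = b * a)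
    (hg : g ∈ normalizer (V : Set G)) {x : G} (hx : x ∈ V ⊔ zpowers g) {n : ℕ} (hn : 0 < n) :
    engel g x n ∈ cmtrSubgroup V g := by
  obtain ⟨m, rfl⟩ : ∃ m, n = m + 1 := ⟨n - 1, by omega⟩
  have hxN := sup_zpowers_le_normalizer_cmtrSubgroup hab hg hx
  rw [engel_succ_eq_iterate, ← inv_cmtr]
  exact Set.MapsTo.iterate (fun w hw ↦ cmtr_mem_of_mem_normalizer hw hxN) m
    (inv_mem (cmtr_mem_cmtrSubgroup_of_mem_sup hab hg hx))

lemma cmtrSubgroup_subset_of_engel_mem (hab : ∀ a ∈ V, ∀ b ∈ V, a * b = b * a)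
    (hg : g ∈ normalizer (V : Set G)) (hcop : Nat.Coprime (orderOf g) (Nat.card V)) {R : Set G}
    (hR : ∀ x ∈ V ⊔ zpowers g, ∃ n₀ : ℕ, 0 < n₀ ∧ ∀ n ≥ n₀, engel g x n ∈ R) :
    (cmtrSubgroup V g : Set G) ⊆ R := by
  intro w hw
  have hgN := sup_zpowers_le_normalizer_cmtrSubgroup hab hg (mem_sup_right (mem_zpowers g))
  obtain ⟨u, hu, hwu⟩ :=
    (mem_cmtrSubgroup_iff hab hg).mp ((mem_normalizer_iff.mp hgN w⁻¹).mp (inv_mem hw))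
  have hstart : cmtr g (u * g) = w := by
    rw [cmtr_mul_self_right, hwu]; group
  have horbit (m : ℕ) : engel g (u * g) (m + 1) = (cmtr · g)^[m] w := by
    rw [engel_succ_eq_iterate, hstart]
    induction m with
    | zero => rfl
    | succ m ih =>
      have hy := cmtrSubgroup_le hg ((mapsTo_cmtr_cmtrSubgroup hg).iterate m hw)
      rw [iterate_succ_apply', iterate_succ_apply', ih]
      exact cmtr_mul_right_of_commute_s8 (hab _ hy u hu) g
  obtain ⟨n₀, -, hsink⟩ := hR (u * g) (mul_mem (mem_sup_left hu) (mem_sup_right (mem_zpowers g)))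
  have hd := minimalPeriod_pos_of_mem_periodicPts (mem_periodicPts_cmtr hab hg hcop hw)
  have hmem := hsink (n₀ * minimalPeriod (cmtr · g) w + 1) (by nlinarith)
  rwa [horbit, ((isPeriodicPt_minimalPeriod _ w).const_mul n₀).eq] at hmem

end EngelSinks

/-- Let `V` be an abelian subgroup of a finite group `G` and `g` an element normalizing `V`
of order coprime to `|V|`; let `H = ⟨V, g⟩` and `W = [V,g]`. Then `W` coincides with the
minimal left Engel sink of `g` with respect to `H`, and `W` is the minimal right Engel sink
of `g` with respect to `H`. -/
theorem commutator_eq_engel_sinks {G : Type*} [Group G] [Finite G]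
    (V : Subgroup G) (hab : ∀ a ∈ V, ∀ b ∈ V, a * b = b * a)
    (g : G) (hnorm : ∀ v ∈ V, g⁻¹ * v * g ∈ V)
    (hcop : Nat.Coprime (orderOf g) (Nat.card V))
    (H : Subgroup G) (hH : H = V ⊔ Subgroup.zpowers g)
    (W : Subgroup G) (hW : W = Subgroup.closure {z : G | ∃ v ∈ V, z = cmtr v g}) :
    ((W : Set G) = {z : G | z ∈ H ∧ ∃ n : ℕ, 1 ≤ n ∧ engel z g n = z}) ∧
    ((W : Set G) ⊆ (H : Set G) ∧ (W : Set G).Finite ∧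
      ∀ x ∈ H, ∃ n₀ : ℕ, 0 < n₀ ∧ ∀ n ≥ n₀, engel g x n ∈ (W : Set G)) ∧
    (∀ R : Set G, R ⊆ (H : Set G) → R.Finite →
      (∀ x ∈ H, ∃ n₀ : ℕ, 0 < n₀ ∧ ∀ n ≥ n₀, engel g x n ∈ R) →
      (W : Set G) ⊆ R) := by
  subst hH hW
  have hg : g ∈ normalizer (V : Set G) := mem_normalizer_of_forall_conj_mem hnorm
  refine ⟨coe_cmtrSubgroup_eq_setOf_engel hab hg hcop,
    ⟨fun w hw ↦ mem_sup_left (cmtrSubgroup_le hg hw), Set.toFinite _,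
      fun x hx ↦ ⟨1, one_pos, fun n hn ↦ engel_mem_cmtrSubgroup hab hg hx hn⟩⟩,
    fun R _ _ ↦ cmtrSubgroup_subset_of_engel_mem hab hg hcop⟩
end

section
/- Let G be a finite group, p a prime, P a p-subgroup of G, and g ∈ G an element of order coprime to p that normalizes P. If g has a right Engel sink of cardinality at most m, then the subgroup [P,g] generated by all commutators [v,g] with v ∈ P is nilpotent of nilpotency class at most 2m + 1. -/
/-!
Let `H = [P,g]`, let `φ` be conjugation by `g` on `H`, and write `[x,φ] = x⁻¹ φ(x)` and `γ i` for
the lower central series of `H` (so `γ 0 = H`). Since `g` is a `p'`-element acting on the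
`p`-group `H`, modulo any `φ`-invariant normal subgroup no nontrivial `[u,φ]` is fixed by `φ`
(else `φ^t(u) = u [u,φ]^t`), and `H = [H,φ] H'`. Hence if `φ` acts trivially on both
`γ i / γ (i+1)` and `γ (i+1) / γ (i+2)`, it acts trivially on `γ i / γ (i+2)`; together with
`[γ i, H'] ≤ γ (i+2)` (three subgroups lemma) this gives `γ (i+1) = γ (i+2)`, so `γ (i+1) = 1`.
Likewise `φ` acts nontrivially on `γ 0 / γ 1` unless `H = 1`.

If `a ∈ γ i` and `[a,φ] ∉ γ (i+1)`, then for `x = g a⁻¹` the Engel commutators `[g,_n x]`,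
`n ≥ 1`, lie in `γ i \ γ (i+1)`, so the sink meets that factor. If `γ (2m+1) ≠ 1`, the sink thus
meets at least `m + 1` of the factors `γ 0 / γ 1, …, γ (2m) / γ (2m+1)`, in distinct elements.
-/

open Function
open scoped commutatorElement

lemma Monotone.add_lt_of_lt_or_lt {c : ℕ → ℕ} (hc : Monotone c) {m : ℕ} (h0 : c 0 < c 1)
    (h : ∀ i < 2 * m, c i < c (i + 1) ∨ c (i + 1) < c (i + 2)) : c 0 + m < c (2 * m + 1) := by
  induction m with
  | zero => simpa using h0
  | succ m ih =>
    have ih := ih fun i hi => h i (by omega)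
    have h1 := hc (show 2 * m + 2 ≤ 2 * (m + 1) + 1 by omega)
    have h2 := hc (show 2 * m + 1 ≤ 2 * m + 2 by omega)
    have h3 : c (2 * m + 1) < c (2 * m + 2) ∨ c (2 * m + 2) < c (2 * (m + 1) + 1) :=
      h (2 * m + 1) (by omega)
    omega

section EndCommutator

variable {Q : Type*} [Group Q] {p t : ℕ}

def endCommutator (σ : Q →* Q) (x : Q) : Q := x⁻¹ * σ x

lemma IsPGroup.mem_of_pow_mem (hQ : IsPGroup p Q) (hcop : t.Coprime p) {S : Subgroup Q}
    {v : Q} (hv : v ^ t ∈ S) : v ∈ S := by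
  obtain ⟨s, hs⟩ := exists_pow_eq_self_of_coprime (hQ.orderOf_coprime hcop.symm v).symm
  rw [← hs]
  exact S.pow_mem hv s

lemma iterate_map_eq_mul_pow {σ : Q →* Q} {u v : Q} (hv : σ v = v) (hu : σ u = u * v)
    (k : ℕ) : σ^[k] u = u * v ^ k := by
  induction k with
  | zero => simp
  | succ k ih =>
    rw [iterate_succ_apply', ih, map_mul, map_pow, hu, hv, mul_assoc, ← pow_succ']

lemma endCommutator_eq_one_of_endCommutator_eq_one {σ : Q →* Q} (hσ : ∀ x, σ^[t] x = x)
    (hQ : IsPGroup p Q) (hcop : t.Coprime p) {u : Q}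
    (h : endCommutator σ (endCommutator σ u) = 1) : endCommutator σ u = 1 := by
  set v := endCommutator σ u
  have hv : σ v = v := (inv_mul_eq_one.mp h).symm
  have hu : σ u = u * v := by simp [v, endCommutator]
  have hvt : v ^ t = 1 := by
    simpa [hσ u] using iterate_map_eq_mul_pow hv hu t
  simpa using hQ.mem_of_pow_mem hcop (S := ⊥) (by simpa using hvt)

lemma iterate_endCommutator_ne_one {σ : Q →* Q} (hσ : ∀ x, σ^[t] x = x)
    (hQ : IsPGroup p Q) (hcop : t.Coprime p) {u : Q} (h : endCommutator σ u ≠ 1) (n : ℕ) :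
    (endCommutator σ)^[n] (endCommutator σ u) ≠ 1 := by
  induction n generalizing u with
  | zero => exact h
  | succ n ih =>
    exact ih (mt (endCommutator_eq_one_of_endCommutator_eq_one hσ hQ hcop) h)

lemma exists_endCommutator_eq_of_iterate_eq_one {V : Type*} [CommGroup V] {σ : V →* V}
    (hV : IsPGroup p V) (hcop : t.Coprime p) {c : V} (hc : (fun y => c * σ y)^[t] 1 = 1) :
    ∃ w, endCommutator σ w = c := by
  -- `(fun y => c * σ y)^[k] 1` is the norm `c σ(c) ⋯ σ^(k-1)(c)`, and `c ^ k` differs from it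
  -- by an element of the image of `σ / id`.
  let B := (MonoidHom.id V / σ).range
  have hpow : ∀ k, c ^ k / (fun y => c * σ y)^[k] 1 ∈ B := by
    intro k
    induction k with
    | zero => simp
    | succ k ih =>
      rw [iterate_succ_apply', pow_succ', mul_div_mul_left_eq_div,
        ← div_mul_div_cancel _ ((fun y => c * σ y)^[k] 1)]
      exact B.mul_mem ih ⟨_, rfl⟩
  obtain ⟨w, hw⟩ := hV.mem_of_pow_mem hcop (S := B) (by simpa [hc] using hpow t)
  exact ⟨w⁻¹, by simpa [endCommutator, div_eq_mul_inv] using hw⟩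

end EndCommutator

section LowerCentralSeries

variable {K : Type*} [Group K]

local notation "γ" => Subgroup.lowerCentralSeries (⊤ : Subgroup K)

lemma Subgroup.commutator_commutator_le_of_rotate {H₁ H₂ H₃ N : Subgroup K} [N.Normal]
    (h1 : ⁅⁅H₂, H₃⁆, H₁⁆ ≤ N) (h2 : ⁅⁅H₃, H₁⁆, H₂⁆ ≤ N) : ⁅⁅H₁, H₂⁆, H₃⁆ ≤ N := by
  rw [← QuotientGroup.ker_mk' N, ← map_eq_bot_iff] at h1 h2 ⊢
  simp only [map_commutator] at h1 h2 ⊢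
  exact commutator_commutator_eq_bot_of_rotate h1 h2

lemma Subgroup.commutator_lowerCentralSeries_le (i j : ℕ) :
    ⁅γ i, γ j⁆ ≤ γ (i + j + 1) := by
  induction j generalizing i with
  | zero => rfl
  | succ j ih =>
    rw [Subgroup.lowerCentralSeries_succ, Subgroup.commutator_comm]
    apply Subgroup.commutator_commutator_le_of_rotate
    · rw [commutator_comm ⊤, ← Subgroup.lowerCentralSeries_succ]
      convert ih (i + 1) using 2
      omega
    · exact Subgroup.commutator_mono (ih i) le_rfl

lemma Subgroup.lowerCentralSeries_eq_bot_of_eq_succ [Group.IsNilpotent K] {n : ℕ}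
    (h : γ n = γ (n + 1)) : γ n = ⊥ := by
  have hconst : ∀ k, γ (n + k) = γ n := by
    intro k
    induction k with
    | zero => rfl
    | succ k ih =>
      rw [← add_assoc, Subgroup.lowerCentralSeries_succ, ih, ← Subgroup.lowerCentralSeries_succ,
        h]
  obtain ⟨c, hc⟩ := Subgroup.nilpotent_iff_lowerCentralSeries.mp ‹Group.IsNilpotent K›
  rw [← hconst c, eq_bot_iff, ← hc]
  exact Subgroup.lowerCentralSeries_antitone _ (Nat.le_add_left c n)

end LowerCentralSeries

section Layers

variable {K : Type*} [Group K] {p t : ℕ} (φ : K →* K)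

local notation "γ" => Subgroup.lowerCentralSeries (⊤ : Subgroup K)

lemma map_mem_lowerCentralSeries {n : ℕ} {x : K} (hx : x ∈ γ n) : φ x ∈ γ n := by
  have := Subgroup.mem_map_of_mem φ hx
  rw [Subgroup.map_lowerCentralSeries] at this
  exact Subgroup.lowerCentralSeries_mono n le_top this

lemma endCommutator_mem_lowerCentralSeries {n : ℕ} {x : K} (hx : x ∈ γ n) :
    endCommutator φ x ∈ γ n :=
  mul_mem (inv_mem hx) (map_mem_lowerCentralSeries φ hx)

variable {φ}

lemma iterate_endCommutator_not_mem (hφ : ∀ x, φ^[t] x = x) (hK : IsPGroup p K)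
    (hcop : t.Coprime p) {N : Subgroup K} [N.Normal] (hN : ∀ x ∈ N, φ x ∈ N) {ψ : K →* K}
    (hψ : ∀ w, (φ w)⁻¹ * ψ w ∈ N) {u : K} (hu : endCommutator φ u ∉ N) (n : ℕ) :
    (endCommutator ψ)^[n + 1] u ∉ N := by
  let σ := QuotientGroup.map N N φ hN
  have hφσ : Semiconj (QuotientGroup.mk' N) φ σ := fun _ => rfl
  have hσ : ∀ y, σ^[t] y = y := by
    intro y
    induction y using QuotientGroup.induction_on with
    | H x => simpa [hφ x] using ((hφσ.iterate_right t) x).symm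
  have hsemi : ∀ χ : K →* K, (∀ w, (φ w)⁻¹ * χ w ∈ N) →
      Semiconj (QuotientGroup.mk' N) (endCommutator χ) (endCommutator σ) := by
    intro χ hχ w
    have : (χ w : K ⧸ N) = σ w := ((QuotientGroup.eq (s := N)).mpr (hχ w)).symm
    simp [endCommutator, this, σ]
  rw [← QuotientGroup.eq_one_iff, ← QuotientGroup.mk'_apply,
    ((hsemi ψ hψ).iterate_right (n + 1)) u, iterate_succ_apply]
  refine iterate_endCommutator_ne_one hσ (hK.to_quotient N) hcop ?_ n
  rwa [← hsemi φ (by simp [one_mem]) u, QuotientGroup.mk'_apply, Ne, QuotientGroup.eq_one_iff]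

lemma commutator_endCommutator_mem {A N : Subgroup K} [A.Normal] [N.Normal]
    (hA : ∀ x ∈ A, endCommutator φ x ∈ N) {a : K} (ha : a ∈ A) (w : K) :
    ⁅a, endCommutator φ w⁆ ∈ N := by
  set x := w * a⁻¹ * w⁻¹
  have hx : x ∈ A := ‹A.Normal›.conj_mem _ (inv_mem ha) w
  have key : ⁅a, endCommutator φ w⁆
      = w⁻¹ * (endCommutator φ x * (φ w * (a * endCommutator φ a * a⁻¹) * (φ w)⁻¹)) *
        w⁻¹⁻¹ := by
    simp only [endCommutator, commutatorElement_def, x, map_mul, map_inv]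
    group
  rw [key]
  refine ‹N.Normal›.conj_mem _ (mul_mem (hA x hx) ?_) _
  exact ‹N.Normal›.conj_mem _ (‹N.Normal›.conj_mem _ (hA a ha) a) _

lemma exists_endCommutator_mul_eq (hsurj : Surjective (Abelianization.of ∘ endCommutator φ))
    (u : K) : ∃ w, ∃ z ∈ commutator K, endCommutator φ w * z = u := by
  obtain ⟨w, hw⟩ := hsurj (Abelianization.of u)
  refine ⟨w, (endCommutator φ w)⁻¹ * u, ?_, mul_inv_cancel_left _ _⟩
  rw [← Abelianization.ker_of, MonoidHom.mem_ker, map_mul, map_inv, ← hw, comp_apply,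
    inv_mul_cancel]

lemma lowerCentralSeries_succ_le_of_endCommutator_mem
    (hsurj : Surjective (Abelianization.of ∘ endCommutator φ)) {i : ℕ}
    (h : ∀ a ∈ γ i, endCommutator φ a ∈ γ (i + 2)) : γ (i + 1) ≤ γ (i + 2) := by
  rw [Subgroup.lowerCentralSeries_succ, Subgroup.commutator_le]
  intro a ha u _
  obtain ⟨w, z, hz, rfl⟩ := exists_endCommutator_mul_eq hsurj u
  have key : ⁅a, endCommutator φ w * z⁆
      = ⁅a, endCommutator φ w⁆ * (endCommutator φ w * ⁅a, z⁆ * (endCommutator φ w)⁻¹) := by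
    simp only [commutatorElement_def]
    group
  rw [key]
  refine mul_mem (commutator_endCommutator_mem h ha w)
    (Subgroup.Normal.conj_mem inferInstance _ ?_ _)
  rw [← Subgroup.top_lowerCentralSeries_one] at hz
  exact Subgroup.commutator_lowerCentralSeries_le i 1 (Subgroup.commutator_mem_commutator ha hz)

lemma lowerCentralSeries_zero_eq_bot_of_endCommutator_mem [Group.IsNilpotent K]
    (hsurj : Surjective (Abelianization.of ∘ endCommutator φ))
    (h : ∀ a ∈ γ 0, endCommutator φ a ∈ γ 1) : γ 0 = ⊥ := by
  refine Subgroup.lowerCentralSeries_eq_bot_of_eq_succ (le_antisymm (fun u _ => ?_)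
    (Subgroup.lowerCentralSeries_antitone _ (Nat.zero_le 1)))
  obtain ⟨w, z, hz, rfl⟩ := exists_endCommutator_mul_eq hsurj u
  exact mul_mem (h w (Subgroup.mem_top w)) hz

lemma lowerCentralSeries_succ_eq_bot_of_endCommutator_mem [Group.IsNilpotent K]
    (hφ : ∀ x, φ^[t] x = x) (hK : IsPGroup p K) (hcop : t.Coprime p)
    (hsurj : Surjective (Abelianization.of ∘ endCommutator φ)) {i : ℕ}
    (h₁ : ∀ a ∈ γ i, endCommutator φ a ∈ γ (i + 1))
    (h₂ : ∀ a ∈ γ (i + 1), endCommutator φ a ∈ γ (i + 2)) : γ (i + 1) = ⊥ := by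
  have h : ∀ a ∈ γ i, endCommutator φ a ∈ γ (i + 2) := by
    intro a ha
    by_contra hna
    exact iterate_endCommutator_not_mem hφ hK hcop (fun x hx => map_mem_lowerCentralSeries φ hx)
      (by simp [one_mem]) hna 1 (h₂ _ (h₁ a ha))
  exact Subgroup.lowerCentralSeries_eq_bot_of_eq_succ
    (le_antisymm (lowerCentralSeries_succ_le_of_endCommutator_mem hsurj h)
      (Subgroup.lowerCentralSeries_antitone _ (Nat.le_succ _)))

theorem lowerCentralSeries_two_mul_card_add_one_eq_bot [Group.IsNilpotent K]
    (hφ : ∀ x, φ^[t] x = x) (hK : IsPGroup p K) (hcop : t.Coprime p)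
    (hsurj : Surjective (Abelianization.of ∘ endCommutator φ)) (R : Finset K)
    (hR : ∀ i, ∀ a ∈ γ i, endCommutator φ a ∉ γ (i + 1) → ∃ r ∈ R, r ∈ γ i ∧ r ∉ γ (i + 1)) :
    γ (2 * R.card + 1) = ⊥ := by
  classical
  by_contra hne
  have hne' : ∀ i ≤ 2 * R.card + 1, γ i ≠ ⊥ := fun i hi hi' =>
    hne (eq_bot_iff.mpr (hi' ▸ Subgroup.lowerCentralSeries_antitone _ hi))
  -- `c i` counts the elements of `R` outside `γ i`; it increases at every layer on which `φ`
  -- acts nontrivially.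
  set c := fun i => (R.filter (· ∉ γ i)).card
  have hc : Monotone c := fun i j hij => Finset.card_le_card (Finset.monotone_filter_right _
    fun _ _ hr hri => hr (Subgroup.lowerCentralSeries_antitone _ hij hri))
  have hlt : ∀ i, ¬ (∀ a ∈ γ i, endCommutator φ a ∈ γ (i + 1)) → c i < c (i + 1) := by
    intro i hi
    push Not at hi
    obtain ⟨a, ha, hna⟩ := hi
    obtain ⟨r, hrR, hri, hri'⟩ := hR i a ha hna
    refine Finset.card_lt_card ((Finset.ssubset_iff_of_subset ?_).mpr ⟨r, ?_, ?_⟩)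
    · exact Finset.monotone_filter_right _ fun _ _ hr hri =>
        hr (Subgroup.lowerCentralSeries_antitone _ (Nat.le_succ i) hri)
    · exact Finset.mem_filter.mpr ⟨hrR, hri'⟩
    · simp [hri]
  have h0 : c 0 < c 1 := hlt 0 fun h =>
    hne' 0 (Nat.zero_le _) (lowerCentralSeries_zero_eq_bot_of_endCommutator_mem hsurj h)
  have hpair : ∀ i < 2 * R.card, c i < c (i + 1) ∨ c (i + 1) < c (i + 2) := by
    intro i hi
    by_cases h₁ : ∀ a ∈ γ i, endCommutator φ a ∈ γ (i + 1)
    · exact .inr (hlt (i + 1) fun h₂ => hne' (i + 1) (by omega)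
        (lowerCentralSeries_succ_eq_bot_of_endCommutator_mem hφ hK hcop hsurj h₁ h₂))
    · exact .inl (hlt i h₁)
  have := hc.add_lt_of_lt_or_lt h0 hpair
  have : c (2 * R.card + 1) ≤ R.card := Finset.card_filter_le _ _
  omega

end Layers

section Engel

variable {G : Type*} [Group G]

lemma engel_mul_inv_succ (g a : G) (n : ℕ) :
    engel g (g * a⁻¹) (n + 1) = engel a (g * a⁻¹) (n + 1) := by
  induction n with
  | zero => simp only [engel, cmtr]; group
  | succ n ih => exact congrArg (cmtr · (g * a⁻¹)) ih

def conjOn (H : Subgroup G) (x : G) (hx : ∀ h ∈ H, x⁻¹ * h * x ∈ H) : H →* H :=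
  MonoidHom.mk' (fun h => ⟨x⁻¹ * h * x, hx h h.2⟩) fun a b => by
    ext
    simp only [Subgroup.coe_mul]
    group

variable {H : Subgroup G} {x : G} (hx : ∀ h ∈ H, x⁻¹ * h * x ∈ H)

@[simp]
lemma coe_conjOn_apply (h : H) : (conjOn H x hx h : G) = x⁻¹ * h * x := rfl

lemma coe_iterate_conjOn_apply (h : H) (k : ℕ) :
    ((conjOn H x hx)^[k] h : G) = (x ^ k)⁻¹ * h * x ^ k := by
  induction k with
  | zero => simp
  | succ k ih => rw [iterate_succ_apply', coe_conjOn_apply, ih, pow_succ]; group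

lemma iterate_conjOn_orderOf (h : H) : (conjOn H x hx)^[orderOf x] h = h :=
  Subtype.ext (by simp [coe_iterate_conjOn_apply, pow_orderOf_eq_one])

lemma engel_eq_coe_iterate_endCommutator (h : H) (n : ℕ) :
    engel (h : G) x n = ((endCommutator (conjOn H x hx))^[n] h : G) := by
  induction n with
  | zero => rfl
  | succ n ih =>
    rw [iterate_succ_apply', engel, ih]
    simp [cmtr, endCommutator, mul_assoc]

end Engel

section CmtrClosure

variable {G : Type*} [Group G] {p : ℕ} {g : G}

def cmtrClosure (X : Set G) (g : G) : Subgroup G :=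
  Subgroup.closure {z | ∃ v ∈ X, z = cmtr v g}

lemma conj_mem_cmtrClosure {X : Set G} (hX : ∀ v ∈ X, g⁻¹ * v * g ∈ X) :
    ∀ h ∈ cmtrClosure X g, g⁻¹ * h * g ∈ cmtrClosure X g := by
  have : cmtrClosure X g ≤ (cmtrClosure X g).comap (MulAut.conj g⁻¹).toMonoidHom := by
    refine Subgroup.closure_le _ |>.mpr ?_
    rintro _ ⟨v, hv, rfl⟩
    exact Subgroup.subset_closure ⟨g⁻¹ * v * g, hX v hv, by simp [cmtr, mul_assoc]⟩
  intro h hh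
  simpa using this hh

lemma cmtrClosure_le {P : Subgroup G} (hP : ∀ v ∈ P, g⁻¹ * v * g ∈ P) : cmtrClosure P g ≤ P := by
  refine Subgroup.closure_le _ |>.mpr ?_
  rintro _ ⟨v, hv, rfl⟩
  have : cmtr v g = v⁻¹ * (g⁻¹ * v * g) := by simp only [cmtr]; group
  rw [SetLike.mem_coe, this]
  exact mul_mem (inv_mem hv) (hP v hv)

lemma surjective_abelianization_of_comp_endCommutator {X : Set G}
    (hg : ∀ h ∈ cmtrClosure X g, g⁻¹ * h * g ∈ cmtrClosure X g)
    (hH : IsPGroup p (cmtrClosure X g)) (hcop : (orderOf g).Coprime p) :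
    Surjective (Abelianization.of ∘ endCommutator (conjOn _ g hg)) := by
  set H := cmtrClosure X g
  set φ := conjOn H g hg
  let σ := Abelianization.map φ
  let B := ((MonoidHom.id _)⁻¹ * σ).range
  have hof : Surjective (Abelianization.of : H →* _) := QuotientGroup.mk_surjective
  have hgen : ∀ c : H, (c : G) ∈ {z | ∃ v ∈ X, z = cmtr v g} → Abelianization.of c ∈ B := by
    rintro c ⟨v, -, hc⟩
    refine exists_endCommutator_eq_of_iterate_eq_one (hH.of_surjective _ hof) hcop ?_
    have hsemi : Semiconj Abelianization.of (fun y => c * φ y)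
        (fun y => Abelianization.of c * σ y) := fun y => by simp [σ, Abelianization.map_of]
    have hcoe : ∀ k, (((fun y => c * φ y)^[k] 1 : H) : G) = cmtr v (g ^ k) := by
      intro k
      induction k with
      | zero => simp [cmtr]
      | succ k ih =>
        rw [iterate_succ_apply', Subgroup.coe_mul, coe_conjOn_apply, ih, hc, pow_succ]
        simp only [cmtr]; group
    have hone : (fun y => c * φ y)^[orderOf g] 1 = 1 := by
      simpa [cmtr, pow_orderOf_eq_one] using hcoe (orderOf g)
    rw [← map_one Abelianization.of, ← hsemi.iterate_right, hone]
  have htop : B = ⊤ := by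
    have hcl : Subgroup.closure ((↑) ⁻¹' {z | ∃ v ∈ X, z = cmtr v g} : Set H) = ⊤ :=
      Subgroup.closure_closure_coe_preimage
    rw [eq_top_iff, ← MonoidHom.range_eq_top.mpr hof, MonoidHom.range_eq_map, ← hcl,
      MonoidHom.map_closure, Subgroup.closure_le]
    rintro _ ⟨c, hc, rfl⟩
    exact hgen c hc
  intro y
  obtain ⟨w', hw'⟩ := htop ▸ Subgroup.mem_top y
  obtain ⟨w, rfl⟩ := hof w'
  exact ⟨w, by simpa [endCommutator, σ, Abelianization.map_of] using hw'⟩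

lemma IsRightEngelSink.exists_mem_of_endCommutator_not_mem {H : Subgroup G}
    (hg : ∀ h ∈ H, g⁻¹ * h * g ∈ H) {R : Set G} (hR : IsRightEngelSink g R) (hH : IsPGroup p H)
    (hcop : (orderOf g).Coprime p) {i : ℕ} {a : H}
    (ha : a ∈ Subgroup.lowerCentralSeries ⊤ i)
    (hβ : endCommutator (conjOn H g hg) a ∉ Subgroup.lowerCentralSeries ⊤ (i + 1)) :
    ∃ r : H, (r : G) ∈ R ∧ r ∈ Subgroup.lowerCentralSeries ⊤ i ∧
      r ∉ Subgroup.lowerCentralSeries ⊤ (i + 1) := by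
  have hx : ∀ h ∈ H, (g * (a : G)⁻¹)⁻¹ * h * (g * (a : G)⁻¹) ∈ H := fun h hh => by
    have : (g * (a : G)⁻¹)⁻¹ * h * (g * (a : G)⁻¹) = a * (g⁻¹ * h * g) * (a : G)⁻¹ := by group
    rw [this]
    exact mul_mem (mul_mem a.2 (hg h hh)) (inv_mem a.2)
  -- For `x = g a⁻¹` the Engel sequence `[g,_n x]` agrees for `n ≥ 1` with `[a,_n x]`, which stays
  -- in `H`, and conjugation by `x` agrees with `φ` modulo `γ (i + 1)`.
  set ψ := conjOn H (g * (a : G)⁻¹) hx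
  obtain ⟨n₀, hn₀, hsink⟩ := hR.2 (g * (a : G)⁻¹)
  obtain ⟨n, rfl⟩ := Nat.exists_eq_add_one_of_ne_zero hn₀.ne'
  refine ⟨(endCommutator ψ)^[n + 1] a, ?_, ?_, ?_⟩
  · rw [← engel_eq_coe_iterate_endCommutator, ← engel_mul_inv_succ]
    exact hsink _ le_rfl
  · have : Set.MapsTo (endCommutator ψ) (Subgroup.lowerCentralSeries (⊤ : Subgroup H) i)
        (Subgroup.lowerCentralSeries (⊤ : Subgroup H) i) := fun _ hy =>
      endCommutator_mem_lowerCentralSeries ψ hy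
    exact this.iterate _ ha
  · refine iterate_endCommutator_not_mem (iterate_conjOn_orderOf hg) hH hcop
      (fun _ hy => map_mem_lowerCentralSeries _ hy) (fun w => ?_) hβ n
    have : (conjOn H g hg w)⁻¹ * ψ w = ⁅a, (conjOn H g hg w)⁻¹⁆⁻¹ :=
      Subtype.ext (by simp [commutatorElement_def, ψ]; group)
    rw [this]
    exact inv_mem (Subgroup.commutator_mem_commutator ha (Subgroup.mem_top _))

end CmtrClosure

/-- If a `p'`-element `g` of a finite group normalizes a `p`-subgroup `P` and has a right
Engel sink of cardinality at most `m`, then `[P,g]` is nilpotent of class at most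
`2m + 1`. -/
theorem commutator_with_p_subgroup_nilpotency_class {G : Type*} [Group G] [Finite G]
    (p : ℕ) (hp : p.Prime) (P : Subgroup G) (hP : IsPGroup p P)
    (g : G) (hcop : Nat.Coprime (orderOf g) p) (hnorm : ∀ v ∈ P, g⁻¹ * v * g ∈ P)
    (m : ℕ) (hsink : ∃ R : Finset G, R.card ≤ m ∧ IsRightEngelSink g ↑R) :
    lowerCentralSeries (Subgroup.closure {z : G | ∃ v ∈ P, z = cmtr v g}) (2 * m + 1)
      = ⊥ := by
  classical
  have : Fact p.Prime := ⟨hp⟩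
  obtain ⟨R, hRm, hR⟩ := hsink
  change (cmtrClosure (P : Set G) g).lowerCentralSeries (2 * m + 1) = ⊥
  set H := cmtrClosure (P : Set G) g
  have hg : ∀ h ∈ H, g⁻¹ * h * g ∈ H := conj_mem_cmtrClosure hnorm
  have hH : IsPGroup p H := hP.to_le (cmtrClosure_le hnorm)
  have := hH.isNilpotent
  have hbot := lowerCentralSeries_two_mul_card_add_one_eq_bot (iterate_conjOn_orderOf hg) hH hcop
    (surjective_abelianization_of_comp_endCommutator hg hH hcop) (R.subtype (· ∈ H))
    fun i a ha hβ => by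
      obtain ⟨r, hrR, hr⟩ := hR.exists_mem_of_endCommutator_not_mem hg hH hcop ha hβ
      exact ⟨r, Finset.mem_subtype.mpr hrR, hr⟩
  have hcard : (R.subtype (· ∈ H)).card ≤ m :=
    (Finset.card_subtype _ _).trans_le ((Finset.card_filter_le _ _).trans hRm)
  rw [← Subgroup.top_subtype_lowerCentralSeries H, eq_bot_iff, ← Subgroup.map_bot H.subtype,
    ← hbot]
  exact Subgroup.map_mono (Subgroup.lowerCentralSeries_antitone _ (by omega))
end

section
/- Let G be a finite solvable group such that every element g ∈ G has a right Engel sink of cardinality at most m. Then there is a nilpotent normal subgroup N of G such that the exponent of G/N divides m! (equivalently, the exponent of the quotient of G by its Fitting subgroup divides m!). -/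
/-!
Induction on `|G|`. A minimal normal subgroup `V` of the solvable group `G` is an abelian
`p`-group, and by induction `G ⧸ V` has a nilpotent normal subgroup `N` containing all `m!`-th
powers. The subgroup `N' ∩ C_G(V)`, where `N'` is the preimage of `N`, is nilpotent since `V` is
central in it, and it contains every `x ^ m!`: let `a` be the automorphism of `V` induced by `x`.

If `ℓ ≠ p` is prime and `ℓ ^ k` divides the order of `a`, some power `y` of `x` induces an
automorphism `σ` of order `ℓ ^ k`. The action of `⟨σ⟩` on `V` is coprime, so `v ↦ [v, σ ^ j]`
permutes `[V, σ ^ j]` and the Engel commutators `[v, y ^ j, …, y ^ j]` eventually return to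
`[v, σ ^ j]`. A nontrivial
`v ∈ [V, σ ^ ℓ ^ (k - 1)]` is fixed by no nontrivial power of `σ`, so the `ℓ ^ k` elements
`[v, σ ^ j]` are distinct and all lie in the Engel sink of `v`: thus `ℓ ^ k ≤ m`, and `ℓ ^ k ∣ m!`.
Hence `a ^ m!` has `p`-power order. The `p`-part of `x ^ m!` lies in the normal `p`-subgroup
generated by the `p`-elements of `N'`, which centralizes `V` by minimality; so `a ^ m! = 1`.
-/

open scoped Nat
open Subgroup

section EngelSinks

variable {G H : Type*} [Group G] [Group H]

@[simp]
lemma map_cmtr (f : G →* H) (a b : G) : f (cmtr a b) = cmtr (f a) (f b) := by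
  simp [cmtr]

lemma map_engel (f : G →* H) (a b : G) (n : ℕ) : f (engel a b n) = engel (f a) (f b) n := by
  induction n with
  | zero => rfl
  | succ n ih => simp [engel, ih]

variable (G) in
def HasRightEngelSinksOfCardLE (m : ℕ) : Prop :=
  ∀ g : G, ∃ R : Finset G, R.card ≤ m ∧ IsRightEngelSink g R

lemma HasRightEngelSinksOfCardLE.of_surjective {m : ℕ} (hG : HasRightEngelSinksOfCardLE G m)
    (f : G →* H) (hf : Function.Surjective f) : HasRightEngelSinksOfCardLE H m := by
  classical
  intro h
  obtain ⟨g, rfl⟩ := hf h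
  obtain ⟨R, hRm, -, hR⟩ := hG g
  refine ⟨R.image f, Finset.card_image_le.trans hRm, Finset.finite_toSet _, fun x => ?_⟩
  obtain ⟨y, rfl⟩ := hf x
  obtain ⟨n₀, hn₀, hR⟩ := hR y
  exact ⟨n₀, hn₀, fun n hn => by simpa [map_engel] using Finset.mem_image_of_mem f (hR n hn)⟩

end EngelSinks

namespace MulAut

open scoped IsMulCommutative

variable {A : Type*} [Group A] [IsMulCommutative A]

def commutatorMap (c : MulAut A) : A →* A where
  toFun v := c v / v
  map_one' := by simp
  map_mul' v w := by simp only [map_mul, mul_div_mul_comm]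

@[simp]
lemma commutatorMap_apply (c : MulAut A) (v : A) : c.commutatorMap v = c v / v := rfl

variable {c : MulAut A} {n : ℕ}

/-- `v ^ n = ∏_{i < n} cⁱ v` telescopes to `cⁿ u / u = 1` when `v = c u / u` is fixed by `c`. -/
lemma eq_one_of_mem_range_commutatorMap (hc : c ^ n = 1) (hA : ∀ v : A, v ^ n = 1 → v = 1)
    {v : A} (hv : v ∈ c.commutatorMap.range) (hfix : c v = v) : v = 1 := by
  obtain ⟨u, rfl⟩ := hv
  apply hA
  have hstep (i : ℕ) : (c ^ (i + 1)) u / (c ^ i) u = c.commutatorMap u := by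
    have hfix_pow : (c ^ i) (c.commutatorMap u) = c.commutatorMap u := by
      induction i with
      | zero => rfl
      | succ i ih => rw [pow_succ', mul_apply, ih, hfix]
    rw [← hfix_pow, commutatorMap_apply, map_div, pow_succ, mul_apply]
  calc c.commutatorMap u ^ n = ∏ i ∈ Finset.range n, ((c ^ (i + 1)) u / (c ^ i) u) := by
        simp only [hstep, Finset.prod_const, Finset.card_range]
    _ = 1 := by rw [Finset.prod_range_div (fun i => (c ^ i) u), hc]; simp

lemma commutatorMap_apply_mem_periodicPts [Finite A] (hc : c ^ n = 1)
    (hA : ∀ v : A, v ^ n = 1 → v = 1) (v : A) :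
    c.commutatorMap v ∈ Function.periodicPts c.commutatorMap := by
  let f : c.commutatorMap.range → c.commutatorMap.range := fun w => ⟨c.commutatorMap w, w, rfl⟩
  have hf : Function.Injective f := by
    intro w₁ w₂ h
    have hfix : c (w₁ / w₂ : A) = w₁ / w₂ := by
      have h' : c w₁ / w₁ = c w₂ / w₂ := congrArg Subtype.val h
      rw [map_div, div_eq_div_iff_div_eq_div, h']
    exact Subtype.ext <| div_eq_one.1 <|
      eq_one_of_mem_range_commutatorMap hc hA (div_mem w₁.2 w₂.2) hfix
  exact Function.Semiconj.mapsTo_periodicPts (fun _ => rfl : Function.Semiconj Subtype.val f _)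
    (hf.mem_periodicPts ⟨c.commutatorMap v, v, rfl⟩)

end MulAut

lemma pow_prime_pow_pred_mem_zpowers_pow {M : Type*} [Group M] {g : M} {ℓ a j : ℕ}
    (hℓ : ℓ.Prime) (hg : orderOf g = ℓ ^ a) (hj : ¬ ℓ ^ a ∣ j) :
    g ^ ℓ ^ (a - 1) ∈ zpowers (g ^ j) := by
  have hj0 : j ≠ 0 := by rintro rfl; exact hj (dvd_zero _)
  obtain ⟨s, u, hℓu, rfl⟩ := Nat.exists_eq_pow_mul_and_not_dvd hj0 ℓ hℓ.ne_one
  have hsa : s < a := by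
    by_contra! h
    exact hj (Dvd.dvd.mul_right (pow_dvd_pow ℓ h) u)
  set h := g ^ ℓ ^ (a - 1)
  have horder : orderOf h = ℓ := by
    rw [orderOf_pow_of_dvd (pow_ne_zero _ hℓ.ne_zero) (hg ▸ pow_dvd_pow ℓ (a.sub_le 1)), hg,
      Nat.pow_div (a.sub_le 1) hℓ.pos, Nat.sub_sub_self (by omega), pow_one]
  have hpow : (g ^ (ℓ ^ s * u)) ^ ℓ ^ (a - 1 - s) = h ^ u := by
    rw [← pow_mul, ← pow_mul, mul_right_comm, ← pow_add, Nat.add_sub_cancel' (by omega)]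
  have hh : h ∈ zpowers (h ^ u) := by
    rw [mem_zpowers_pow_iff, horder]
    exact (hℓ.coprime_iff_not_dvd.2 hℓu).symm
  exact zpowers_le.2 (hpow ▸ pow_mem (mem_zpowers _) _) hh

lemma dvd_pow_factorization_mul_factorial {n p m : ℕ} (hn : n ≠ 0)
    (h : ∀ ℓ k : ℕ, ℓ.Prime → ℓ ≠ p → 0 < k → ℓ ^ k ∣ n → ℓ ^ k ≤ m) :
    n ∣ p ^ n.factorization p * m ! := by
  refine (Nat.dvd_iff_prime_pow_dvd_dvd _ _).2 fun ℓ k hℓ hdvd => ?_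
  rcases eq_or_ne ℓ p with rfl | hℓp
  · exact (pow_dvd_pow ℓ ((hℓ.pow_dvd_iff_le_factorization hn).1 hdvd)).mul_right _
  rcases k.eq_zero_or_pos with rfl | hk
  · exact one_dvd _
  exact (Nat.dvd_factorial (pow_pos hℓ.pos k) (h ℓ k hℓ hℓp hk hdvd)).mul_left _

section ConjugationOnAbelianNormal

variable {G : Type*} [Group G] {V : Subgroup G} [V.Normal] [IsMulCommutative V]

lemma cmtr_coe_eq_commutatorMap (w : V) (y : G) :
    cmtr (w : G) y = ((MulAut.conjNormal y)⁻¹.commutatorMap w : G) := by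
  have hconj : y⁻¹ * w * y ∈ V := by simpa using Normal.conj_mem ‹_› _ w.2 y⁻¹
  have hcomm := setLike_mul_comm (V.inv_mem w.2) hconj
  rw [MulAut.commutatorMap_apply, div_eq_mul_inv, coe_mul, MulAut.conjNormal_inv_apply, coe_inv,
    ← hcomm, cmtr]
  group

lemma engel_coe_eq_iterate_commutatorMap (w : V) (y : G) (n : ℕ) :
    engel (w : G) y n = ((MulAut.conjNormal y)⁻¹.commutatorMap^[n] w : G) := by
  induction n with
  | zero => rfl
  | succ n ih => rw [engel, ih, cmtr_coe_eq_commutatorMap, Function.iterate_succ_apply']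

end ConjugationOnAbelianNormal

theorem prime_pow_le_of_orderOf_conjNormal {G : Type*} [Group G] [Finite G] {m : ℕ}
    (hG : HasRightEngelSinksOfCardLE G m) {V : Subgroup G} [V.Normal] [IsMulCommutative V]
    {p ℓ a : ℕ} (hV : IsPGroup p V) (hpℓ : p.Coprime ℓ) (hℓ : ℓ.Prime) (ha : 0 < a) {y : G}
    (hy : orderOf (MulAut.conjNormal y : MulAut V) = ℓ ^ a) : ℓ ^ a ≤ m := by
  set σ : MulAut V := (MulAut.conjNormal y)⁻¹
  have hσ : orderOf σ = ℓ ^ a := by rw [orderOf_inv, hy]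
  have hσ_pow (j : ℕ) : (σ ^ j) ^ ℓ ^ a = 1 := by
    rw [← pow_mul, mul_comm, pow_mul, ← hσ, pow_orderOf_eq_one, one_pow]
  have hV_coprime (v : V) (hv : v ^ ℓ ^ a = 1) : v = 1 :=
    orderOf_eq_one_iff.1 <| Nat.eq_one_of_dvd_coprimes (hV.orderOf_coprime (hpℓ.pow_right a) v)
      dvd_rfl (orderOf_dvd_of_pow_eq_one hv)
  -- `v` is a nontrivial element of `[V, σ^(ℓ^(a-1))]`: no nontrivial power of `σ` fixes it
  set g := σ ^ ℓ ^ (a - 1)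
  have hg : g ≠ 1 := pow_ne_one_of_lt_orderOf (pow_ne_zero _ hℓ.ne_zero)
    (hσ ▸ Nat.pow_lt_pow_right hℓ.one_lt (by omega))
  obtain ⟨u, hu⟩ : ∃ u, g u ≠ u := by
    by_contra! h
    exact hg (MulEquiv.ext h)
  set v := g.commutatorMap u
  have hv : v ≠ 1 := by simpa [v, div_eq_one] using hu
  have hfree (j : ℕ) (hj : 0 < j) (hjd : j < ℓ ^ a) : (σ ^ j) v ≠ v := by
    intro hfix
    have hg_stab : g ∈ MulAction.stabilizer (MulAut V) v :=
      zpowers_le.2 (MulAction.mem_stabilizer_iff.2 hfix)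
        (pow_prime_pow_pred_mem_zpowers_pow hℓ hσ (Nat.not_dvd_of_pos_of_lt hj hjd))
    exact hv (MulAut.eq_one_of_mem_range_commutatorMap (hσ_pow _) hV_coprime ⟨u, rfl⟩ hg_stab)
  obtain ⟨R, hRm, hR⟩ := hG v
  have hmem (j : ℕ) : ((σ ^ j).commutatorMap v : G) ∈ R := by
    obtain ⟨k, hk, hper⟩ := MulAut.commutatorMap_apply_mem_periodicPts (hσ_pow j) hV_coprime v
    obtain ⟨n₀, -, hn₀⟩ := hR.2 (y ^ j)
    have h := hn₀ (k * n₀ + 1) (by nlinarith)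
    rwa [engel_coe_eq_iterate_commutatorMap, map_pow, ← inv_pow, Function.iterate_succ_apply,
      (hper.mul_const n₀).eq] at h
  have hinj : Set.InjOn (fun j => ((σ ^ j).commutatorMap v : G)) (Set.Iio (ℓ ^ a)) := by
    intro i hi j hj hij
    replace hij : (σ ^ i) v = (σ ^ j) v := by simpa using hij
    wlog hle : i ≤ j generalizing i j
    · exact (this hj hi hij.symm (by omega)).symm
    by_contra hne
    rw [← pow_mul_pow_sub σ hle, MulAut.mul_apply] at hij
    exact hfree (j - i) (by omega) (by simp at hj; omega) ((σ ^ i).injective hij).symm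
  calc ℓ ^ a = (Finset.range (ℓ ^ a)).card := (Finset.card_range _).symm
    _ ≤ R.card := Finset.card_le_card_of_injOn _ (fun j _ => hmem j) (by simpa using hinj)
    _ ≤ m := hRm

lemma MulAut.conjNormal_eq_one_iff {G : Type*} [Group G] {V : Subgroup G} [V.Normal] {g : G} :
    (MulAut.conjNormal g : MulAut V) = 1 ↔ g ∈ centralizer V := by
  simp only [MulEquiv.ext_iff, Subtype.ext_iff, MulAut.conjNormal_apply, MulAut.one_apply,
    mul_inv_eq_iff_eq_mul, mem_centralizer_iff, SetLike.mem_coe, Subtype.forall]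
  exact forall₂_congr fun _ _ => eq_comm

section MinimalNormal

variable {G : Type*} [Group G]

def Subgroup.IsMinimalNormal (V : Subgroup G) : Prop :=
  Minimal (fun W : Subgroup G => W.Normal ∧ W ≠ ⊥) V

lemma Subgroup.IsMinimalNormal.isMulCommutative [Group.IsSolvable G] {V : Subgroup G}
    (hV : V.IsMinimalNormal) : IsMulCommutative V := by
  have := hV.1.1
  rw [← commutator_self_eq_bot_iff]
  by_contra hne
  exact (Group.IsSolvable.commutator_lt_of_ne_bot hV.1.2).not_ge
    (hV.2 ⟨inferInstance, hne⟩ (commutator_le_left V V))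

lemma Subgroup.IsMinimalNormal.exists_isPGroup [Finite G] {V : Subgroup G}
    (hV : V.IsMinimalNormal) [IsMulCommutative V] : ∃ p, p.Prime ∧ IsPGroup p V := by
  have := hV.1.1
  have : Nontrivial V := V.nontrivial_iff_ne_bot.2 hV.1.2
  obtain ⟨p, hp, hpV⟩ := Nat.exists_prime_and_dvd (Finite.one_lt_card (α := V)).ne'
  have : Fact p.Prime := ⟨hp⟩
  obtain ⟨P⟩ := Sylow.nonempty (p := p) (G := V)
  have := P.characteristic_of_normal (inferInstance : (P : Subgroup V).Normal)
  have hP : (P : Subgroup V).map V.subtype ≠ ⊥ := by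
    simpa [map_eq_bot_iff_of_injective _ V.subtype_injective] using P.ne_bot_of_dvd_card hpV
  exact ⟨p, hp, (P.isPGroup'.map V.subtype).to_le
    (hV.2 ⟨inferInstance, hP⟩ (map_subtype_le _))⟩

/-- The fixed points of `O` on `V` form a nontrivial normal subgroup contained in `V`. -/
lemma Subgroup.IsMinimalNormal.le_centralizer_of_isPGroup [Finite G] {p : ℕ} [Fact p.Prime]
    {V O : Subgroup G} (hV : V.IsMinimalNormal) (hVp : IsPGroup p V) [O.Normal]
    (hOp : IsPGroup p O) : O ≤ centralizer V := by
  have := hV.1.1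
  let _ : MulAction O V := MulAction.compHom V ((MulAut.conjNormal (H := V)).comp O.subtype)
  have hp : p ∣ Nat.card V := by
    obtain ⟨k, hk, hcard⟩ := hVp.nontrivial_iff_card.1 (V.nontrivial_iff_ne_bot.2 hV.1.2)
    exact hcard ▸ dvd_pow_self p hk.ne'
  obtain ⟨v, hv, hv1⟩ :=
    hOp.exists_fixed_point_of_prime_dvd_card_of_fixed_point V hp (a := 1) fun o =>
      map_one (MulAut.conjNormal (o : G))
  have hvO : (v : G) ∈ centralizer O := mem_centralizer_iff.2 fun o ho => by
    have h : (MulAut.conjNormal o v : G) = v := congrArg Subtype.val (hv ⟨o, ho⟩)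
    rwa [MulAut.conjNormal_apply, mul_inv_eq_iff_eq_mul] at h
  have hne : V ⊓ centralizer O ≠ ⊥ := (Subgroup.ne_bot_iff_exists_ne_one).2
    ⟨⟨v, v.2, hvO⟩, fun h => hv1 (Subtype.ext (congrArg Subtype.val h).symm)⟩
  exact le_centralizer_iff.2 ((hV.2 ⟨inferInstance, hne⟩ inf_le_left).trans inf_le_right)

end MinimalNormal

section Quotient

variable {G : Type*} [Group G] {V : Subgroup G} [V.Normal]

lemma exists_normal_isPGroup_of_isNilpotent [Finite G] {p : ℕ} [Fact p.Prime]
    (hVp : IsPGroup p V) (N : Subgroup (G ⧸ V)) [N.Normal] [Group.IsNilpotent N] :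
    ∃ O : Subgroup G, O.Normal ∧ IsPGroup p O ∧
      ∀ g : G, (g : G ⧸ V) ∈ N → ∀ k, g ^ p ^ k = 1 → g ∈ O := by
  obtain ⟨S⟩ := Sylow.nonempty (p := p) (G := N)
  have := S.characteristic_of_normal inferInstance
  have := Sylow.unique_of_normal S inferInstance
  refine ⟨((S : Subgroup N).map N.subtype).comap (QuotientGroup.mk' V), inferInstance,
    (S.isPGroup'.map N.subtype).comap_of_ker_isPGroup _ (by rwa [QuotientGroup.ker_mk']),
    fun g hg k hgk => ?_⟩
  set z : N := ⟨g, hg⟩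
  have hz : IsPGroup p (zpowers z) := by
    obtain ⟨i, -, hi⟩ := (Nat.dvd_prime_pow Fact.out).1 (orderOf_dvd_of_pow_eq_one
      (Subtype.ext (by simp [z, ← QuotientGroup.mk_pow, hgk]) : z ^ p ^ k = 1))
    exact IsPGroup.of_card ((Nat.card_zpowers z).trans hi)
  obtain ⟨Q, hQ⟩ := hz.exists_le_sylow
  exact ⟨z, Subsingleton.elim Q S ▸ hQ (mem_zpowers z), rfl⟩

lemma isNilpotent_comap_inf_centralizer (N : Subgroup (G ⧸ V)) [Group.IsNilpotent N] :
    Group.IsNilpotent (N.comap (QuotientGroup.mk' V) ⊓ centralizer V : Subgroup G) := by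
  set K := N.comap (QuotientGroup.mk' V) ⊓ centralizer V
  let f : K →* N := ((QuotientGroup.mk' V).comp K.subtype).codRestrict N fun x => x.2.1
  refine Subgroup.isNilpotent_of_ker_le_center f fun x hx =>
    mem_center_iff.2 fun z => Subtype.ext ?_
  have hxV : (x : G) ∈ V := (QuotientGroup.eq_one_iff _).1 (congrArg Subtype.val hx)
  exact (mem_centralizer_iff.1 z.2.2 x hxV).symm

end Quotient

theorem pow_factorial_mem_centralizer {G : Type*} [Group G] [Finite G] {m : ℕ}
    (hG : HasRightEngelSinksOfCardLE G m) {p : ℕ} [Fact p.Prime] {V : Subgroup G} [V.Normal]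
    (hV : V.IsMinimalNormal) [IsMulCommutative V] (hVp : IsPGroup p V)
    {N : Subgroup (G ⧸ V)} [N.Normal] [Group.IsNilpotent N]
    (hN : ∀ x : G ⧸ V, x ^ m ! ∈ N) (x : G) : x ^ m ! ∈ centralizer V := by
  have hp : p.Prime := Fact.out
  obtain ⟨O, hO, hOp, hmemO⟩ := exists_normal_isPGroup_of_isNilpotent hVp N
  set a : MulAut V := MulAut.conjNormal x
  have ha : orderOf a ∣ p ^ (orderOf a).factorization p * m ! := by
    refine dvd_pow_factorization_mul_factorial (orderOf_pos a).ne' fun ℓ k hℓ hℓp hk hdvd => ?_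
    refine prime_pow_le_of_orderOf_conjNormal hG hVp ((Nat.coprime_primes hp hℓ).2 hℓp.symm) hℓ hk
      (y := x ^ (orderOf a / ℓ ^ k)) ?_
    rw [map_pow, orderOf_pow_orderOf_div (orderOf_pos a).ne' hdvd]
  -- the `p`-part `w ^ t` of `w` lies in `O`, which centralizes `V`
  set w := x ^ (m !)
  set t := ordCompl[p] (orderOf w)
  have hwt : w ^ t ∈ O := by
    refine hmemO _ (by simpa [← QuotientGroup.mk_pow] using N.pow_mem (hN x) t)
      ((orderOf w).factorization p) ?_
    rw [← pow_mul, mul_comm, Nat.ordProj_mul_ordCompl_eq_self, pow_orderOf_eq_one]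
  have ht : MulAut.conjNormal w ^ t = (1 : MulAut V) := by
    rw [← map_pow, MulAut.conjNormal_eq_one_iff]
    exact hV.le_centralizer_of_isPGroup hVp hOp hwt
  have hpb : MulAut.conjNormal w ^ p ^ (orderOf a).factorization p = (1 : MulAut V) := by
    rw [map_pow, ← pow_mul, mul_comm, orderOf_dvd_iff_pow_eq_one.1 ha]
  have hcop : t.Coprime (p ^ (orderOf a).factorization p) :=
    ((Nat.coprime_ordCompl hp (orderOf_pos w).ne').pow_left _).symm
  rw [← MulAut.conjNormal_eq_one_iff]
  simpa [hcop] using pow_gcd_eq_one.2 ⟨ht, hpb⟩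

theorem exists_isNilpotent_normal_pow_factorial_mem {G : Type*} [Group G] [Finite G]
    [Group.IsSolvable G] {m : ℕ} (hG : HasRightEngelSinksOfCardLE G m) :
    ∃ N : Subgroup G, N.Normal ∧ Group.IsNilpotent N ∧ ∀ x : G, x ^ m ! ∈ N := by
  induction hn : Nat.card G using Nat.strong_induction_on generalizing G with
  | _ n ih =>
  rcases subsingleton_or_nontrivial G with hG1 | hG1
  · exact ⟨⊤, inferInstance, inferInstance, fun x => mem_top _⟩
  obtain ⟨V, hV⟩ : ∃ V : Subgroup G, V.IsMinimalNormal :=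
    exists_minimal_of_wellFoundedLT _ ⟨⊤, inferInstance, top_ne_bot⟩
  have := hV.1.1
  have := hV.isMulCommutative
  obtain ⟨p, hp, hVp⟩ := hV.exists_isPGroup
  have : Fact p.Prime := ⟨hp⟩
  have hlt : Nat.card (G ⧸ V) < n := by
    rw [← hn, ← index_eq_card, ← V.index_mul_card]
    exact lt_mul_of_one_lt_right (Nat.pos_of_ne_zero index_ne_zero_of_finite)
      (V.one_lt_card_iff_ne_bot.2 hV.1.2)
  obtain ⟨N, hN, hNnil, hNpow⟩ :=
    ih _ hlt (hG.of_surjective _ (QuotientGroup.mk'_surjective V)) rfl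
  exact ⟨N.comap (QuotientGroup.mk' V) ⊓ centralizer V, inferInstance,
    isNilpotent_comap_inf_centralizer N,
    fun x => ⟨by simpa using hNpow x, pow_factorial_mem_centralizer hG hV hVp hNpow x⟩⟩

/-- In a finite solvable group all of whose elements have right Engel sinks of cardinality
at most `m`, there is a nilpotent normal subgroup modulo which the exponent divides `m!`. -/
theorem solvable_exponent_divides_factorial {G : Type*} [Group G] [Finite G]
    [Group.IsSolvable G] (m : ℕ)
    (h : ∀ g : G, ∃ R : Finset G, R.card ≤ m ∧ IsRightEngelSink g ↑R) :
    ∃ N : Subgroup G, N.Normal ∧ Group.IsNilpotent N ∧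
      ∀ [N.Normal], Monoid.exponent (G ⧸ N) ∣ Nat.factorial m := by
  obtain ⟨N, hN, hNnil, hpow⟩ := exists_isNilpotent_normal_pow_factorial_mem h
  refine ⟨N, hN, hNnil, Monoid.exponent_dvd_of_forall_pow_eq_one fun q => ?_⟩
  induction q using QuotientGroup.induction_on with
  | H x => rw [← QuotientGroup.mk_pow, QuotientGroup.eq_one_iff]; exact hpow x
end

section
/- Let H be a divisible group (for every h ∈ H and every positive integer k there exists x ∈ H with x^k = h) such that every element of H is almost right Engel. Then for any g, x ∈ H there is a positive integer n₀ such that [[g,_n x], g] = 1 for all n ≥ n₀. -/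
lemma cmtr_conj {G : Type*} [Group G] (a b u : G) :
    cmtr (u⁻¹ * a * u) (u⁻¹ * b * u) = u⁻¹ * cmtr a b * u := by
  simp only [cmtr, mul_inv_rev, inv_inv]
  group

lemma engel_conj {G : Type*} [Group G] (a b u : G) (n : ℕ) :
    engel (u⁻¹ * a * u) (u⁻¹ * b * u) n = u⁻¹ * engel a b n * u := by
  induction n with
  | zero => rfl
  | succ n ih => rw [engel, ih, cmtr_conj]; rfl

theorem divisible_almost_right_engel_aux {H : Type*} [Group H]
    (hdiv : ∀ h : H, ∀ k : ℕ, 0 < k → ∃ x : H, x ^ k = h)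
    (h : ∀ g : H, AlmostRightEngel g) :
    ∀ g x : H, ∃ n₀ : ℕ, 0 < n₀ ∧ ∀ n ≥ n₀, cmtr (engel g x n) g = 1 := by
  intro g x
  obtain ⟨R, hRfin, hsink⟩ := h g
  set r := hRfin.toFinset.card with hr
  obtain ⟨w, hw⟩ := hdiv g (Nat.factorial r) (Nat.factorial_pos r)
  have hcwg : Commute w g := by rw [← hw]; exact (Commute.refl w).pow_right _
  have hconjg : ∀ j : ℕ, (w ^ j)⁻¹ * g * (w ^ j) = g := by
    intro j
    have hc : w ^ j * g = g * w ^ j := (hcwg.pow_left j).eq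
    rw [mul_assoc, ← hc, ← mul_assoc, inv_mul_cancel, one_mul]
  choose N hNpos hN using fun j : ℕ => hsink ((w ^ j)⁻¹ * x * (w ^ j))
  refine ⟨(Finset.range (r + 1)).sup N + 1, Nat.succ_pos _, ?_⟩
  intro n hn
  set a := engel g x n with ha
  have hmem : ∀ j ∈ Finset.range (r + 1), (w ^ j)⁻¹ * a * (w ^ j) ∈ hRfin.toFinset := by
    intro j hj
    have hle : N j ≤ n :=
      le_trans (le_trans (Finset.le_sup hj) (Nat.le_succ _)) hn
    have h1 := hN j n hle
    have h2 := engel_conj g x (w ^ j) n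
    rw [hconjg j] at h2
    rw [h2] at h1
    exact hRfin.mem_toFinset.mpr h1
  have hcard : hRfin.toFinset.card < (Finset.range (r + 1)).card := by
    simp [hr]
  obtain ⟨i, hi, j, hj, hne, heq⟩ :=
    Finset.exists_ne_map_eq_of_card_lt_of_maps_to hcard hmem
  -- key step: from a coincidence of conjugates, get commutation with a power of w
  have key : ∀ i j : ℕ, i < j → j ≤ r →
      (w ^ i)⁻¹ * a * (w ^ i) = (w ^ j)⁻¹ * a * (w ^ j) → Commute a g := by
    intro i j hij hjr heq
    set t := j - i with ht
    have hjt : j = i + t := by omega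
    set b := (w ^ i)⁻¹ * a * (w ^ i) with hbdef
    have hbt : b = (w ^ t)⁻¹ * b * w ^ t := by
      conv_lhs => rw [heq]
      rw [hjt, pow_add, hbdef]
      group
    have hb : Commute b (w ^ t) := by
      show b * w ^ t = w ^ t * b
      nth_rewrite 2 [hbt]
      group
    have c1 : Commute (w ^ i) (w ^ t) := (Commute.refl w).pow_pow i t
    have haw : Commute a (w ^ t) := by
      have h4 : a = w ^ i * b * (w ^ i)⁻¹ := by rw [hbdef]; group
      rw [h4]
      exact (c1.mul_left hb).mul_left c1.inv_left
    have htpos : 0 < t := by omega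
    have htdvd : t ∣ Nat.factorial r := Nat.dvd_factorial htpos (by omega)
    obtain ⟨m, hm⟩ := htdvd
    rw [← hw, hm, pow_mul]
    exact haw.pow_right m
  have hcom : Commute a g := by
    simp only [Finset.mem_range] at hi hj
    rcases Nat.lt_or_ge i j with hlt | hge
    · exact key i j hlt (by omega) heq
    · have : j < i := by omega
      exact key j i this (by omega) heq.symm
  have hag : a * g = g * a := hcom.eq
  show cmtr a g = 1
  simp only [cmtr]
  rw [mul_assoc (a⁻¹ * g⁻¹) a g, hag]
  group

/-- In a divisible group all of whose elements are almost right Engel, all sufficiently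
long Engel commutators `[g,_n x]` commute with `g`. -/
theorem divisible_almost_right_engel {H : Type*} [Group H]
    (hdiv : ∀ h : H, ∀ k : ℕ, 0 < k → ∃ x : H, x ^ k = h)
    (h : ∀ g : H, AlmostRightEngel g) :
    ∀ g x : H, ∃ n₀ : ℕ, 0 < n₀ ∧ ∀ n ≥ n₀, cmtr (engel g x n) g = 1 := by
  intro g x
  exact divisible_almost_right_engel_aux hdiv h g x
end
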